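/- arXiv:2503.21452 — 4 statements merged into one kernel-verified Lean document; each statement's English description precedes it below -/
import Mathlib

section
/- For every λ ∈ ℝ, the series Σ_{n=1}^∞ λ^n K_n(t,s) converges absolutely and uniformly on the triangle Δ = {(t,s) : t₀ ≤ s ≤ t ≤ T}; its sum R(t,s,λ) is a continuous function of (t,s) on Δ. -/
/-!
Extend `K` continuously from the triangle to the whole plane (Tietze) and iterate the extension
there: the iterated kernels of a continuous kernel on `ℝ × ℝ` are continuous, and on the triangle
they agree with the `Kₙ`. If `|K| ≤ M` on the triangle, induction on `n` gives the Volterra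
estimate `|Kₙ₊₁(t,s)| ≤ Mⁿ⁺¹ (t - s)ⁿ / n!`, so the series is dominated by the convergent series
`∑ |λ|ⁿ⁺¹ Mⁿ⁺¹ (T - t₀)ⁿ / n!`, and the Weierstrass M-test gives all three claims.
-/

open MeasureTheory intervalIntegral Set

open scoped Nat

theorem continuous_intervalIntegral_of_continuous_uncurry {X E : Type*} [TopologicalSpace X]
    [NormedAddCommGroup E] [NormedSpace ℝ E] {f : X → ℝ → E} (hf : Continuous f.uncurry)
    {a b : X → ℝ} (ha : Continuous a) (hb : Continuous b) :
    Continuous fun x => ∫ t in a x..b x, f x t := by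
  have hsub : (fun x => ∫ t in a x..b x, f x t) =
      fun x => (∫ t in (0 : ℝ)..b x, f x t) - ∫ t in (0 : ℝ)..a x, f x t := by
    funext x
    have hfx : Continuous (f x) := hf.uncurry_left x
    exact (integral_interval_sub_left (hfx.intervalIntegrable _ _)
      (hfx.intervalIntegrable _ _)).symm
  rw [hsub]
  exact (continuous_parametric_intervalIntegral_of_continuous hf hb).sub
    (continuous_parametric_intervalIntegral_of_continuous hf ha)

theorem integral_sub_pow_div_factorial (s t : ℝ) (n : ℕ) :
    ∫ z in s..t, (z - s) ^ n / n ! = (t - s) ^ (n + 1) / (n + 1)! := by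
  rw [intervalIntegral.integral_div, integral_comp_sub_right (fun z => z ^ n), integral_pow,
    Nat.factorial_succ]
  push_cast
  field_simp
  ring

def triangle (a b : ℝ) : Set (ℝ × ℝ) := {q | a ≤ q.2 ∧ q.2 ≤ q.1 ∧ q.1 ≤ b}

theorem isClosed_triangle (a b : ℝ) : IsClosed (triangle a b) :=
  (isClosed_le continuous_const continuous_snd).inter
    ((isClosed_le continuous_snd continuous_fst).inter
      (isClosed_le continuous_fst continuous_const))

theorem isCompact_triangle (a b : ℝ) : IsCompact (triangle a b) :=
  (isCompact_Icc (a := (a, a)) (b := (b, b))).of_isClosed_subset (isClosed_triangle a b)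
    fun _ ⟨h₁, h₂, h₃⟩ => ⟨⟨h₁.trans h₂, h₁⟩, ⟨h₃, h₂.trans h₃⟩⟩

theorem mk_mem_triangle_left {a b t s z : ℝ} (hq : (t, s) ∈ triangle a b) (hz : z ∈ Icc s t) :
    (t, z) ∈ triangle a b :=
  ⟨hq.1.trans hz.1, hz.2, hq.2.2⟩

theorem mk_mem_triangle_right {a b t s z : ℝ} (hq : (t, s) ∈ triangle a b) (hz : z ∈ Icc s t) :
    (z, s) ∈ triangle a b :=
  ⟨hq.1, hz.1, hz.2.trans hq.2.2⟩

/-- `iteratedKernel g n` is the `(n + 1)`-st iterated kernel `Kₙ₊₁` of `g`. -/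
noncomputable def iteratedKernel (g : ℝ × ℝ → ℝ) : ℕ → ℝ × ℝ → ℝ
  | 0 => g
  | n + 1 => fun q => ∫ z in q.2..q.1, g (q.1, z) * iteratedKernel g n (z, q.2)

theorem iteratedKernel_succ (g : ℝ × ℝ → ℝ) (n : ℕ) (t s : ℝ) :
    iteratedKernel g (n + 1) (t, s) = ∫ z in s..t, g (t, z) * iteratedKernel g n (z, s) :=
  rfl

theorem continuous_iteratedKernel {g : ℝ × ℝ → ℝ} (hg : Continuous g) (n : ℕ) :
    Continuous (iteratedKernel g n) := by
  induction n with
  | zero => exact hg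
  | succ n ih =>
    refine continuous_intervalIntegral_of_continuous_uncurry (f := fun q z =>
      g (q.1, z) * iteratedKernel g n (z, q.2)) ?_ continuous_snd continuous_fst
    exact (hg.comp (continuous_fst.fst.prodMk continuous_snd)).mul
      (ih.comp (continuous_snd.prodMk continuous_fst.snd))

theorem abs_iteratedKernel_le {g : ℝ × ℝ → ℝ} {a b M : ℝ}
    (hM : ∀ q ∈ triangle a b, |g q| ≤ M) (n : ℕ) :
    ∀ q ∈ triangle a b, |iteratedKernel g n q| ≤ M ^ (n + 1) * ((q.1 - q.2) ^ n / n !) := by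
  induction n with
  | zero => simpa [iteratedKernel] using hM
  | succ n ih =>
    rintro ⟨t, s⟩ hq
    have hpointwise : ∀ z ∈ Ioc s t, |g (t, z) * iteratedKernel g n (z, s)| ≤
        M ^ (n + 2) * ((z - s) ^ n / n !) := by
      intro z hz
      have hz' : z ∈ Icc s t := Ioc_subset_Icc_self hz
      have hgz := hM _ (mk_mem_triangle_left hq hz')
      rw [abs_mul, pow_succ', mul_assoc]
      exact mul_le_mul hgz (ih _ (mk_mem_triangle_right hq hz')) (abs_nonneg _)
        ((abs_nonneg _).trans hgz)
    have hmajorant : IntervalIntegrable (fun z => M ^ (n + 2) * ((z - s) ^ n / n !)) volume s t :=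
      Continuous.intervalIntegrable (by fun_prop) _ _
    rw [iteratedKernel_succ, ← Real.norm_eq_abs]
    calc ‖∫ z in s..t, g (t, z) * iteratedKernel g n (z, s)‖
        ≤ ∫ z in s..t, M ^ (n + 2) * ((z - s) ^ n / n !) :=
          norm_integral_le_of_norm_le hq.2.1 (ae_of_all _ hpointwise) hmajorant
      _ = M ^ (n + 2) * ((t - s) ^ (n + 1) / (n + 1)!) := by
          rw [intervalIntegral.integral_const_mul, integral_sub_pow_div_factorial]

theorem iteratedKernel_eq_of_eqOn_triangle {K : ℝ → ℝ → ℝ} {Kn : ℕ → ℝ → ℝ → ℝ}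
    {g : ℝ × ℝ → ℝ} {a b : ℝ} (hg : ∀ q ∈ triangle a b, g q = K q.1 q.2)
    (hKn1 : ∀ t s, Kn 1 t s = K t s)
    (hKnrec : ∀ n, 2 ≤ n → ∀ t s, Kn n t s = ∫ z in s..t, K t z * Kn (n - 1) z s) (n : ℕ) :
    ∀ q ∈ triangle a b, Kn (n + 1) q.1 q.2 = iteratedKernel g n q := by
  induction n with
  | zero => exact fun q hq => (hKn1 _ _).trans (hg q hq).symm
  | succ n ih =>
    rintro ⟨t, s⟩ hq
    rw [hKnrec (n + 2) (by omega), iteratedKernel_succ]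
    refine integral_congr fun z hz => ?_
    rw [uIcc_of_le hq.2.1] at hz
    rw [hg _ (mk_mem_triangle_left hq hz), ← ih _ (mk_mem_triangle_right hq hz)]
    rfl

theorem resolvent_series_converges_general
    (t₀ T : ℝ)
    (K : ℝ → ℝ → ℝ)
    (hK : ContinuousOn (fun q : ℝ × ℝ => K q.1 q.2)
      {q : ℝ × ℝ | t₀ ≤ q.2 ∧ q.2 ≤ q.1 ∧ q.1 ≤ T})
    (Kn : ℕ → ℝ → ℝ → ℝ)
    (hKn1 : ∀ t s, Kn 1 t s = K t s)
    (hKnrec : ∀ n, 2 ≤ n → ∀ t s, Kn n t s = ∫ z in s..t, K t z * Kn (n - 1) z s)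
    (R : ℝ → ℝ → ℝ → ℝ)
    (hR : ∀ t s lam, R t s lam = ∑' n : ℕ, lam ^ (n + 1) * Kn (n + 1) t s) :
    ∀ lam : ℝ,
      (∀ t s, t₀ ≤ s → s ≤ t → t ≤ T →
        Summable (fun n : ℕ => |lam ^ (n + 1) * Kn (n + 1) t s|)) ∧
      TendstoUniformlyOn
        (fun N (q : ℝ × ℝ) => ∑ n ∈ Finset.range N, lam ^ (n + 1) * Kn (n + 1) q.1 q.2)
        (fun q : ℝ × ℝ => R q.1 q.2 lam) Filter.atTop
        {q : ℝ × ℝ | t₀ ≤ q.2 ∧ q.2 ≤ q.1 ∧ q.1 ≤ T} ∧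
      ContinuousOn (fun q : ℝ × ℝ => R q.1 q.2 lam)
        {q : ℝ × ℝ | t₀ ≤ q.2 ∧ q.2 ≤ q.1 ∧ q.1 ≤ T} := by
  intro lam
  obtain ⟨g, hgK⟩ := ContinuousMap.exists_restrict_eq (isClosed_triangle t₀ T)
    ⟨(triangle t₀ T).domRestrict fun q : ℝ × ℝ => K q.1 q.2, hK.domRestrict⟩
  have hg : ∀ q ∈ triangle t₀ T, g q = K q.1 q.2 := fun q hq => DFunLike.congr_fun hgK ⟨q, hq⟩
  have hKn := iteratedKernel_eq_of_eqOn_triangle hg hKn1 hKnrec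
  obtain ⟨M, hM⟩ :=
    (isCompact_triangle t₀ T).exists_bound_of_continuousOn (map_continuous g).continuousOn
  set u : ℕ → ℝ := fun n => |lam| * M * ((|lam| * M * (T - t₀)) ^ n / n !)
  have hu : Summable u := (Real.summable_pow_div_factorial _).mul_left _
  have hbound : ∀ n, ∀ q ∈ triangle t₀ T, ‖lam ^ (n + 1) * Kn (n + 1) q.1 q.2‖ ≤ u n := by
    intro n q hq
    have hM0 : 0 ≤ M := (norm_nonneg _).trans (hM q hq)
    have hlen : (q.1 - q.2) ^ n ≤ (T - t₀) ^ n :=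
      pow_le_pow_left₀ (by linarith [hq.2.1]) (by linarith [hq.1, hq.2.2]) n
    calc ‖lam ^ (n + 1) * Kn (n + 1) q.1 q.2‖ = |lam| ^ (n + 1) * |iteratedKernel g n q| := by
          rw [Real.norm_eq_abs, abs_mul, abs_pow, hKn n q hq]
      _ ≤ |lam| ^ (n + 1) * (M ^ (n + 1) * ((T - t₀) ^ n / n !)) := by
          gcongr
          exact (abs_iteratedKernel_le hM n q hq).trans (by gcongr)
      _ = u n := by simp only [u, mul_pow]; ring
  have hcont : ∀ n, ContinuousOn (fun q : ℝ × ℝ => lam ^ (n + 1) * Kn (n + 1) q.1 q.2)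
      (triangle t₀ T) := fun n =>
    have hJ := continuous_iteratedKernel (map_continuous g) n
    (by fun_prop : Continuous fun q => lam ^ (n + 1) * iteratedKernel g n q).continuousOn.congr
      fun q hq => by rw [hKn n q hq]
  simp only [hR]
  exact ⟨fun t s h₁ h₂ h₃ => .of_nonneg_of_le (fun _ => abs_nonneg _)
      (fun n => hbound n (t, s) ⟨h₁, h₂, h₃⟩) hu,
    tendstoUniformlyOn_tsum_nat hu hbound, continuousOn_tsum hcont hu hbound⟩

/-- The Neumann series Σ λⁿ Kₙ(t,s) converges absolutely and uniformly on the
triangle Δ, and its sum (the resolvent R) is continuous on Δ. -/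
theorem resolvent_series_converges
    (t₀ T : ℝ) (ht : t₀ < T)
    (K : ℝ → ℝ → ℝ)
    (hK : ContinuousOn (fun q : ℝ × ℝ => K q.1 q.2)
      {q : ℝ × ℝ | t₀ ≤ q.2 ∧ q.2 ≤ q.1 ∧ q.1 ≤ T})
    (Kn : ℕ → ℝ → ℝ → ℝ)
    (hKn1 : ∀ t s, Kn 1 t s = K t s)
    (hKnrec : ∀ n, 2 ≤ n → ∀ t s, Kn n t s = ∫ z in s..t, K t z * Kn (n - 1) z s)
    (R : ℝ → ℝ → ℝ → ℝ)
    (hR : ∀ t s lam, R t s lam = ∑' n : ℕ, lam ^ (n + 1) * Kn (n + 1) t s) :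
    ∀ lam : ℝ,
      (∀ t s, t₀ ≤ s → s ≤ t → t ≤ T →
        Summable (fun n : ℕ => |lam ^ (n + 1) * Kn (n + 1) t s|)) ∧
      TendstoUniformlyOn
        (fun N (q : ℝ × ℝ) => ∑ n ∈ Finset.range N, lam ^ (n + 1) * Kn (n + 1) q.1 q.2)
        (fun q : ℝ × ℝ => R q.1 q.2 lam) Filter.atTop
        {q : ℝ × ℝ | t₀ ≤ q.2 ∧ q.2 ≤ q.1 ∧ q.1 ≤ T} ∧
      ContinuousOn (fun q : ℝ × ℝ => R q.1 q.2 lam)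
        {q : ℝ × ℝ | t₀ ≤ q.2 ∧ q.2 ≤ q.1 ∧ q.1 ≤ T} :=
  resolvent_series_converges_general t₀ T K hK Kn hKn1 hKnrec R hR
end

section
/- For every λ ∈ ℝ and every continuous g : [t₀,T] → ℝ, the classical Volterra integral equation of the second kind x(t) = λ ∫_{t₀}^t K(t,s) x(s) ds + g(t), t ∈ [t₀,T], has exactly one continuous solution, and it is given by x(t) = g(t) + ∫_{t₀}^t R(t,s,λ) g(s) ds. -/
/-!
Extend `K` to a bounded continuous kernel `k` on the whole plane by composing it with a retraction
onto the triangle; integrals over `t₀ ≤ s ≤ t ≤ T` do not see the change. For `|k| ≤ M` one has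
`|K_{n+1}(t,s)| ≤ M^{n+1} |t - s|^n / n!`, so the resolvent series converges locally uniformly,
its sum is continuous and satisfies `R(t,s) = λ k(t,s) + λ ∫_s^t k(t,u) R(u,s) du`. Substituting
this into `g + ∫ R g` and exchanging the order of integration over the triangle shows that it
solves the equation. The difference `y` of two solutions satisfies
`|y(t)| ≤ C (|λ| M (t - t₀))^n / n!` for every `n`, hence vanishes.
-/

open MeasureTheory Set Function

theorem abs_intervalIntegral_le_pow_div_factorial {f : ℝ → ℝ} {a b c : ℝ} {n : ℕ}
    (hc : 0 ≤ c) (hf : ∀ z ∈ uIoc a b, |f z| ≤ c * |z - a| ^ n / n.factorial) :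
    |∫ z in a..b, f z| ≤ c * |b - a| ^ (n + 1) / (n + 1).factorial := by
  have hbound : |∫ z in a..b, f z| ≤ |∫ z in a..b, c / n.factorial * |z - a| ^ n| := by
    refine intervalIntegral.norm_integral_le_abs_of_norm_le (f := f) ?_
      ((by fun_prop : Continuous fun z => c / n.factorial * |z - a| ^ n).intervalIntegrable
        (μ := volume) a b)
    filter_upwards [ae_restrict_mem measurableSet_uIoc] with z hz
    simpa only [Real.norm_eq_abs, mul_div_right_comm] using hf z hz
  rw [intervalIntegral.integral_const_mul, abs_mul,
    intervalIntegral.abs_intervalIntegral_eq (fun z => |z - a| ^ n), integral_pow_abs_sub_uIoc,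
    abs_of_nonneg (by positivity : 0 ≤ c / (n.factorial : ℝ)),
    abs_of_nonneg (by positivity : (0 : ℝ) ≤ |b - a| ^ (n + 1) / (n + 1))] at hbound
  refine hbound.trans_eq ?_
  rw [Nat.factorial_succ]
  push_cast
  field_simp

theorem integral_integral_triangle_swap {a b : ℝ} (hab : a ≤ b) {H : ℝ → ℝ → ℝ}
    (hH : Continuous (uncurry H)) :
    ∫ s in a..b, ∫ z in a..s, H s z = ∫ z in a..b, ∫ s in z..b, H s z := by
  -- Both sides are iterated integrals of `G` over the square, in the two orders.
  set G : ℝ → ℝ → ℝ := fun s z => {p : ℝ × ℝ | p.2 ≤ p.1}.indicator (uncurry H) (s, z)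
  have hG : IntegrableOn (uncurry G) (uIoc a b ×ˢ uIoc a b) :=
    ((hH.continuousOn.integrableOn_compact (isCompact_uIcc.prod isCompact_uIcc)).mono_set
      (prod_mono uIoc_subset_uIcc uIoc_subset_uIcc)).indicator
      (measurableSet_le measurable_snd measurable_fst)
  have hinner : ∀ s ∈ Ioc a b, ∫ z in a..s, H s z = ∫ z in a..b, G s z := by
    intro s hs
    have : ∀ z, G s z = (Iic s).indicator (H s) z := fun z => by
      simp [G, indicator_apply]
    simp_rw [this, intervalIntegral.integral_of_le hab,
      intervalIntegral.integral_of_le hs.1.le, setIntegral_indicator measurableSet_Iic,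
      Ioc_inter_Iic, inf_eq_right.mpr hs.2]
  have houter : ∀ z ∈ Ioc a b, ∫ s in z..b, H s z = ∫ s in a..b, G s z := by
    intro z hz
    have : ∀ s, G s z = (Ici z).indicator (fun s => H s z) s := fun s => by
      simp [G, indicator_apply]
    have hset : Ioc a b ∩ Ici z = Icc z b := by
      ext s
      simp only [mem_inter_iff, mem_Ioc, mem_Ici, mem_Icc]
      grind
    simp_rw [this, intervalIntegral.integral_of_le hab, intervalIntegral.integral_of_le hz.2,
      setIntegral_indicator measurableSet_Ici, hset, integral_Icc_eq_integral_Ioc]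
  have hab' : uIoc a b = Ioc a b := uIoc_of_le hab
  rw [intervalIntegral.integral_congr_ae (.of_forall fun s hs => hinner s (hab' ▸ hs)),
    intervalIntegral.integral_congr_ae (.of_forall fun z hz => houter z (hab' ▸ hz))]
  exact intervalIntegral_intervalIntegral_swap hG

theorem exists_continuous_bounded_extension_of_continuousOn_triangle {a b : ℝ} (hab : a ≤ b)
    {K : ℝ → ℝ → ℝ}
    (hK : ContinuousOn (uncurry K) {q : ℝ × ℝ | a ≤ q.2 ∧ q.2 ≤ q.1 ∧ q.1 ≤ b}) :
    ∃ k : ℝ → ℝ → ℝ, Continuous (uncurry k) ∧ (∃ M, ∀ t s, |k t s| ≤ M) ∧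
      ∀ t s, a ≤ s → s ≤ t → t ≤ b → k t s = K t s := by
  set c : ℝ → ℝ := fun u => max a (min u b)
  set π : ℝ × ℝ → ℝ × ℝ := fun q => (c q.1, max a (min q.2 (c q.1)))
  have hπ_mem : ∀ q, a ≤ (π q).2 ∧ (π q).2 ≤ (π q).1 ∧ (π q).1 ≤ b := fun q =>
    ⟨le_max_left _ _, max_le (le_max_left _ _) (min_le_right _ _),
      max_le hab (min_le_right _ _)⟩
  have hπ_id : ∀ q : ℝ × ℝ, a ≤ q.2 → q.2 ≤ q.1 → q.1 ≤ b → π q = q := by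
    intro q h1 h2 h3
    simp only [π, c, min_eq_left h3, max_eq_right (h1.trans h2), min_eq_left h2,
      max_eq_right h1]
  have hk : Continuous (uncurry K ∘ π) := hK.comp_continuous (by fun_prop) hπ_mem
  obtain ⟨M, hM⟩ := (isCompact_Icc.prod isCompact_Icc).exists_bound_of_continuousOn
    (s := Icc a b ×ˢ Icc a b) hk.continuousOn
  refine ⟨fun t s => (uncurry K ∘ π) (t, s), hk, ⟨M, fun t s => ?_⟩,
    fun t s h1 h2 h3 => by simp only [comp_apply, hπ_id (t, s) h1 h2 h3, uncurry_apply_pair]⟩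
  obtain ⟨h1, h2, h3⟩ := hπ_mem (t, s)
  have := hM (π (t, s)) ⟨⟨h1.trans h2, h3⟩, ⟨h1, h2.trans h3⟩⟩
  rwa [comp_apply, hπ_id _ h1 h2 h3, Real.norm_eq_abs] at this

namespace Volterra

-- `iteratedKernel k n` is the paper's `K_{n+1}`.
noncomputable def iteratedKernel (k : ℝ → ℝ → ℝ) : ℕ → ℝ → ℝ → ℝ
  | 0 => k
  | n + 1 => fun t s => ∫ z in s..t, k t z * iteratedKernel k n z s

noncomputable def resolventKernel (k : ℝ → ℝ → ℝ) (lam t s : ℝ) : ℝ :=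
  ∑' n : ℕ, lam ^ (n + 1) * iteratedKernel k n t s

variable {k : ℝ → ℝ → ℝ}

theorem continuous_iteratedKernel (hk : Continuous (uncurry k)) (n : ℕ) :
    Continuous (uncurry (iteratedKernel k n)) := by
  induction n with
  | zero => exact hk
  | succ n ih =>
    have hint : Continuous fun q : (ℝ × ℝ) × ℝ => k q.1.1 q.2 * iteratedKernel k n q.2 q.1.2 :=
      (hk.comp (continuous_fst.fst.prodMk continuous_snd)).mul
        (ih.comp (continuous_snd.prodMk continuous_fst.snd))
    have hsplit : uncurry (iteratedKernel k (n + 1)) = fun p : ℝ × ℝ =>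
        (∫ z in (0 : ℝ)..p.1, k p.1 z * iteratedKernel k n z p.2) -
          ∫ z in (0 : ℝ)..p.2, k p.1 z * iteratedKernel k n z p.2 := by
      ext p
      refine (intervalIntegral.integral_interval_sub_left ?_ ?_).symm <;>
        exact (hint.comp (Continuous.prodMk_right p)).intervalIntegrable _ _
    rw [hsplit]
    exact (intervalIntegral.continuous_parametric_intervalIntegral_of_continuous hint
      continuous_fst).sub
      (intervalIntegral.continuous_parametric_intervalIntegral_of_continuous hint continuous_snd)

variable {M : ℝ}

theorem abs_iteratedKernel_le (hM : ∀ t s, |k t s| ≤ M) (n : ℕ) (t s : ℝ) :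
    |iteratedKernel k n t s| ≤ M ^ (n + 1) * |t - s| ^ n / n.factorial := by
  have hM0 : 0 ≤ M := (abs_nonneg _).trans (hM 0 0)
  induction n generalizing t with
  | zero => simpa [iteratedKernel] using hM t s
  | succ n ih =>
    refine abs_intervalIntegral_le_pow_div_factorial (c := M ^ (n + 2)) (by positivity)
      fun z _ => ?_
    rw [abs_mul, pow_succ', mul_assoc, mul_div_assoc]
    exact mul_le_mul (hM t z) (by simpa only [mul_div_assoc] using ih z) (abs_nonneg _) hM0

theorem norm_resolvent_term_le (hM : ∀ t s, |k t s| ≤ M) (lam : ℝ) (n : ℕ) {t s D : ℝ}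
    (hD : |t - s| ≤ D) :
    ‖lam ^ (n + 1) * iteratedKernel k n t s‖ ≤
      |lam| * M * ((|lam| * M * D) ^ n / n.factorial) := by
  have hM0 : 0 ≤ M := (abs_nonneg _).trans (hM 0 0)
  calc ‖lam ^ (n + 1) * iteratedKernel k n t s‖
      ≤ |lam| ^ (n + 1) * (M ^ (n + 1) * D ^ n / n.factorial) := by
        rw [Real.norm_eq_abs, abs_mul, abs_pow]
        gcongr
        exact (abs_iteratedKernel_le hM n t s).trans (by gcongr)
    _ = |lam| * M * ((|lam| * M * D) ^ n / n.factorial) := by ring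

theorem continuous_resolventKernel (hk : Continuous (uncurry k)) (hM : ∀ t s, |k t s| ≤ M)
    (lam : ℝ) : Continuous (uncurry (resolventKernel k lam)) := by
  refine continuous_iff_continuousAt.mpr fun p => ?_
  set U : Set (ℝ × ℝ) := {q | |q.1 - q.2| < |p.1 - p.2| + 1}
  have hU : IsOpen U := isOpen_lt (by fun_prop) continuous_const
  have hUcont : ContinuousOn (uncurry (resolventKernel k lam)) U :=
    continuousOn_tsum (fun n => (continuous_const.mul (continuous_iteratedKernel hk n)).continuousOn)
      ((Real.summable_pow_div_factorial _).mul_left _)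
      fun n q hq => norm_resolvent_term_le hM lam n hq.le
  exact hUcont.continuousAt (hU.mem_nhds (lt_add_one |p.1 - p.2|))

theorem summable_resolvent_terms (hM : ∀ t s, |k t s| ≤ M) (lam t s : ℝ) :
    Summable fun n : ℕ => lam ^ (n + 1) * iteratedKernel k n t s :=
  .of_norm_bounded ((Real.summable_pow_div_factorial _).mul_left _)
    fun n => norm_resolvent_term_le hM lam n le_rfl

theorem hasSum_integral_mul_resolvent_terms (hk : Continuous (uncurry k))
    (hM : ∀ t s, |k t s| ≤ M) (lam t z : ℝ) :
    HasSum (fun n : ℕ => ∫ s in z..t, k t s * (lam ^ (n + 1) * iteratedKernel k n s z))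
      (∫ s in z..t, k t s * resolventKernel k lam s z) := by
  have hM0 : 0 ≤ M := (abs_nonneg _).trans (hM 0 0)
  refine intervalIntegral.hasSum_integral_of_dominated_convergence
    (fun n _ => M * (|lam| * M * ((|lam| * M * |t - z|) ^ n / n.factorial)))
    (fun n => ?_) (fun n => .of_forall fun s hs => ?_)
    (.of_forall fun _ _ => ((Real.summable_pow_div_factorial _).mul_left _).mul_left _)
    intervalIntegrable_const
    (.of_forall fun s _ => (summable_resolvent_terms hM lam s z).hasSum.mul_left _)
  · exact ((hk.comp (Continuous.prodMk_right t)).mul (continuous_const.mul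
      ((continuous_iteratedKernel hk n).comp (Continuous.prodMk_left z)))).aestronglyMeasurable
  · rw [norm_mul]
    exact mul_le_mul (hM t s) (norm_resolvent_term_le hM lam n
      (abs_sub_left_of_mem_uIcc (uIoc_subset_uIcc hs))) (norm_nonneg _) hM0

theorem resolventKernel_eq (hk : Continuous (uncurry k)) (hM : ∀ t s, |k t s| ≤ M)
    (lam t z : ℝ) :
    resolventKernel k lam t z =
      lam * k t z + lam * ∫ s in z..t, k t s * resolventKernel k lam s z := by
  have hterm : ∀ n : ℕ, lam * ∫ s in z..t, k t s * (lam ^ (n + 1) * iteratedKernel k n s z) =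
      lam ^ (n + 2) * iteratedKernel k (n + 1) t z := fun n => by
    simp_rw [mul_left_comm (k t _), intervalIntegral.integral_const_mul, iteratedKernel]
    ring
  rw [resolventKernel, (summable_resolvent_terms hM lam t z).tsum_eq_zero_add,
    ← ((hasSum_integral_mul_resolvent_terms hk hM lam t z).mul_left lam).tsum_eq]
  simp only [hterm, iteratedKernel, zero_add, pow_one]

noncomputable def solution (k : ℝ → ℝ → ℝ) (lam a : ℝ) (g : ℝ → ℝ) (t : ℝ) : ℝ :=
  g t + ∫ s in a..t, resolventKernel k lam t s * g s

variable {g : ℝ → ℝ}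

theorem continuous_solution (hk : Continuous (uncurry k)) (hM : ∀ t s, |k t s| ≤ M)
    (hg : Continuous g) (lam a : ℝ) : Continuous (solution k lam a g) :=
  hg.add (intervalIntegral.continuous_parametric_intervalIntegral_of_continuous
    ((continuous_resolventKernel hk hM lam).mul (hg.comp continuous_snd)) continuous_id)

theorem solution_eq (hk : Continuous (uncurry k)) (hM : ∀ t s, |k t s| ≤ M)
    (hg : Continuous g) (lam : ℝ) {a t : ℝ} (hat : a ≤ t) :
    solution k lam a g t = lam * (∫ s in a..t, k t s * solution k lam a g s) + g t := by
  set R := resolventKernel k lam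
  have hR : Continuous (uncurry R) := continuous_resolventKernel hk hM lam
  have hkt : Continuous (k t) := hk.comp (Continuous.prodMk_right t)
  have hkg : Continuous fun s => k t s * g s := hkt.mul hg
  have hH : Continuous (uncurry fun u s => k t u * (R u s * g s)) :=
    (hkt.comp continuous_fst).mul (hR.mul (hg.comp continuous_snd))
  have hlower : Continuous fun s => (∫ u in s..t, k t u * R u s) * g s := by
    simp_rw [intervalIntegral.integral_symm t]
    exact (intervalIntegral.continuous_parametric_intervalIntegral_of_continuous
      ((hkt.comp continuous_snd).mul (hR.comp continuous_swap)) continuous_id).neg.mul hg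
  have hupper : Continuous fun u => ∫ s in a..u, k t u * (R u s * g s) :=
    intervalIntegral.continuous_parametric_intervalIntegral_of_continuous hH continuous_id
  suffices ∫ s in a..t, R t s * g s = lam * ∫ s in a..t, k t s * solution k lam a g s by
    rw [solution, this, add_comm]
  calc ∫ s in a..t, R t s * g s
      = ∫ s in a..t, (lam * (k t s * g s) + lam * ((∫ u in s..t, k t u * R u s) * g s)) := by
        simp_rw [R, resolventKernel_eq hk hM lam t]
        congr with s
        ring
    _ = lam * (∫ s in a..t, k t s * g s) +
          lam * ∫ s in a..t, ∫ u in s..t, k t u * (R u s * g s) := by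
        rw [intervalIntegral.integral_add ((hkg.const_mul lam).intervalIntegrable _ _)
          ((hlower.const_mul lam).intervalIntegrable _ _)]
        simp_rw [intervalIntegral.integral_const_mul, ← intervalIntegral.integral_mul_const,
          mul_assoc]
    _ = lam * (∫ s in a..t, k t s * g s) +
          lam * ∫ u in a..t, ∫ s in a..u, k t u * (R u s * g s) := by
        rw [← integral_integral_triangle_swap hat hH]
    _ = lam * ∫ s in a..t, k t s * solution k lam a g s := by
        rw [← mul_add, ← intervalIntegral.integral_add (hkg.intervalIntegrable _ _)
          (hupper.intervalIntegrable _ _)]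
        simp_rw [solution, mul_add, intervalIntegral.integral_const_mul, R]

theorem eqOn_zero_of_homogeneous (hM : ∀ t s, |k t s| ≤ M) {lam a b C : ℝ} {y : ℝ → ℝ}
    (hC : ∀ t ∈ Icc a b, |y t| ≤ C)
    (hy : ∀ t ∈ Icc a b, y t = lam * ∫ s in a..t, k t s * y s) :
    EqOn y 0 (Icc a b) := by
  intro t ht
  show y t = 0
  have hM0 : 0 ≤ M := (abs_nonneg _).trans (hM 0 0)
  have hC0 : 0 ≤ C := (abs_nonneg _).trans (hC a ⟨le_rfl, ht.1.trans ht.2⟩)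
  have hbound : ∀ n : ℕ, ∀ τ ∈ Icc a b,
      |y τ| ≤ C * (|lam| * M) ^ n * |τ - a| ^ n / n.factorial := by
    intro n
    induction n with
    | zero => simpa using hC
    | succ n ih =>
      intro τ hτ
      have hint := abs_intervalIntegral_le_pow_div_factorial (f := fun s => k τ s * y s)
        (c := M * (C * (|lam| * M) ^ n)) (n := n) (by positivity) fun s hs => by
          rw [uIoc_of_le hτ.1] at hs
          rw [abs_mul]
          exact (mul_le_mul (hM τ s) (ih s ⟨hs.1.le, hs.2.trans hτ.2⟩) (abs_nonneg _)
            hM0).trans_eq (by ring)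
      calc |y τ| = |lam| * |∫ s in a..τ, k τ s * y s| := by rw [hy τ hτ, abs_mul]
        _ ≤ |lam| * (M * (C * (|lam| * M) ^ n) * |τ - a| ^ (n + 1) / (n + 1).factorial) := by
          gcongr
        _ = C * (|lam| * M) ^ (n + 1) * |τ - a| ^ (n + 1) / (n + 1).factorial := by ring
  have hlim : Filter.Tendsto (fun n : ℕ => C * ((|lam| * M * |t - a|) ^ n / n.factorial))
      Filter.atTop (nhds 0) := by
    simpa using
      (FloorSemiring.tendsto_pow_div_factorial_atTop (|lam| * M * |t - a|)).const_mul C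
  refine abs_nonpos_iff.mp (ge_of_tendsto hlim (.of_forall fun n => ?_))
  calc |y t| ≤ C * (|lam| * M) ^ n * |t - a| ^ n / n.factorial := hbound n t ht
    _ = C * ((|lam| * M * |t - a|) ^ n / n.factorial) := by ring

theorem eqOn_of_forall_eq_integral_add (hk : Continuous (uncurry k)) (hM : ∀ t s, |k t s| ≤ M)
    {lam a b : ℝ} {x y : ℝ → ℝ} (hx : ContinuousOn x (Icc a b))
    (hy : ContinuousOn y (Icc a b))
    (hxeq : ∀ t ∈ Icc a b, x t = lam * (∫ s in a..t, k t s * x s) + g t)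
    (hyeq : ∀ t ∈ Icc a b, y t = lam * (∫ s in a..t, k t s * y s) + g t) :
    EqOn x y (Icc a b) := by
  obtain ⟨C, hC⟩ := isCompact_Icc.exists_bound_of_continuousOn (hx.sub hy)
  have hint : ∀ t ∈ Icc a b, ∀ f : ℝ → ℝ, ContinuousOn f (Icc a b) →
      IntervalIntegrable (fun s => k t s * f s) volume a t := fun t ht f hf =>
    ((hk.comp (Continuous.prodMk_right t)).continuousOn.mul
      (hf.mono (uIcc_of_le ht.1 ▸ Icc_subset_Icc_right ht.2))).intervalIntegrable
  have hdiff := eqOn_zero_of_homogeneous (y := x - y) hM hC fun t ht => by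
    simp only [Pi.sub_apply, mul_sub]
    rw [intervalIntegral.integral_sub (hint t ht x hx) (hint t ht y hy), hxeq t ht, hyeq t ht]
    ring
  exact fun t ht => sub_eq_zero.mp (hdiff ht)

theorem iteratedKernel_eq_of_eqOn_triangle {a b : ℝ} {K : ℝ → ℝ → ℝ}
    {Kn : ℕ → ℝ → ℝ → ℝ} (hkK : ∀ t s, a ≤ s → s ≤ t → t ≤ b → k t s = K t s)
    (hKn1 : ∀ t s, Kn 1 t s = K t s)
    (hKnrec : ∀ n, 2 ≤ n → ∀ t s, Kn n t s = ∫ z in s..t, K t z * Kn (n - 1) z s)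
    (n : ℕ) {t s : ℝ} (has : a ≤ s) (hst : s ≤ t) (htb : t ≤ b) :
    iteratedKernel k n t s = Kn (n + 1) t s := by
  induction n generalizing t with
  | zero => rw [hKn1]; exact hkK t s has hst htb
  | succ n ih =>
    rw [hKnrec (n + 2) (by omega), iteratedKernel]
    refine intervalIntegral.integral_congr fun z hz => ?_
    rw [uIcc_of_le hst] at hz
    rw [hkK t z (has.trans hz.1) hz.2 htb, ih hz.1 (hz.2.trans htb)]
    rfl

theorem resolventKernel_eq_tsum_of_eqOn_triangle {a b : ℝ} {K : ℝ → ℝ → ℝ}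
    {Kn : ℕ → ℝ → ℝ → ℝ} (hkK : ∀ t s, a ≤ s → s ≤ t → t ≤ b → k t s = K t s)
    (hKn1 : ∀ t s, Kn 1 t s = K t s)
    (hKnrec : ∀ n, 2 ≤ n → ∀ t s, Kn n t s = ∫ z in s..t, K t z * Kn (n - 1) z s)
    (lam : ℝ) {t s : ℝ} (has : a ≤ s) (hst : s ≤ t) (htb : t ≤ b) :
    resolventKernel k lam t s = ∑' n : ℕ, lam ^ (n + 1) * Kn (n + 1) t s :=
  tsum_congr fun n => by rw [iteratedKernel_eq_of_eqOn_triangle hkK hKn1 hKnrec n has hst htb]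

end Volterra

/-- The classical Volterra integral equation of the second kind
x(t) = λ ∫_{t₀}^t K(t,s) x(s) ds + g(t) has exactly one continuous solution,
given by x(t) = g(t) + ∫_{t₀}^t R(t,s,λ) g(s) ds. -/
theorem volterra_second_kind_unique_solution
    (t₀ T : ℝ) (ht : t₀ < T)
    (K : ℝ → ℝ → ℝ)
    (hK : ContinuousOn (fun q : ℝ × ℝ => K q.1 q.2)
      {q : ℝ × ℝ | t₀ ≤ q.2 ∧ q.2 ≤ q.1 ∧ q.1 ≤ T})
    (Kn : ℕ → ℝ → ℝ → ℝ)
    (hKn1 : ∀ t s, Kn 1 t s = K t s)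
    (hKnrec : ∀ n, 2 ≤ n → ∀ t s, Kn n t s = ∫ z in s..t, K t z * Kn (n - 1) z s)
    (R : ℝ → ℝ → ℝ → ℝ)
    (hR : ∀ t s lam, R t s lam = ∑' n : ℕ, lam ^ (n + 1) * Kn (n + 1) t s)
    (lam : ℝ) (g : ℝ → ℝ) (hg : ContinuousOn g (Set.Icc t₀ T)) :
    -- the formula x(t) = g(t) + ∫_{t₀}^t R(t,s,λ) g(s) ds is a continuous solution
    (ContinuousOn (fun t => g t + ∫ s in t₀..t, R t s lam * g s) (Set.Icc t₀ T) ∧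
      ∀ t ∈ Set.Icc t₀ T,
        g t + ∫ s in t₀..t, R t s lam * g s =
          lam * (∫ s in t₀..t, K t s * (g s + ∫ z in t₀..s, R s z lam * g z)) + g t) ∧
    -- and any continuous solution coincides with it on [t₀,T]
    (∀ x : ℝ → ℝ, ContinuousOn x (Set.Icc t₀ T) →
      (∀ t ∈ Set.Icc t₀ T, x t = lam * (∫ s in t₀..t, K t s * x s) + g t) →
      ∀ t ∈ Set.Icc t₀ T, x t = g t + ∫ s in t₀..t, R t s lam * g s) := by
  obtain ⟨k, hk, ⟨M, hM⟩, hkK⟩ :=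
    exists_continuous_bounded_extension_of_continuousOn_triangle ht.le hK
  obtain ⟨G, hG, hGg⟩ : ∃ G : ℝ → ℝ, Continuous G ∧ EqOn G g (Icc t₀ T) :=
    ⟨IccExtend ht.le ((Icc t₀ T).domRestrict g), hg.domRestrict.Icc_extend',
      fun u hu => IccExtend_of_mem _ _ hu⟩
  set X := Volterra.solution k lam t₀ G
  have hXc : Continuous X := Volterra.continuous_solution hk hM hG lam t₀
  have hsub : ∀ t ∈ Icc t₀ T, ∀ s ∈ uIcc t₀ t, s ∈ Icc t₀ T ∧ s ≤ t := fun t ht s hs => by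
    rw [uIcc_of_le ht.1] at hs
    exact ⟨⟨hs.1, hs.2.trans ht.2⟩, hs.2⟩
  have hKk : ∀ t ∈ Icc t₀ T, ∀ f : ℝ → ℝ,
      ∫ s in t₀..t, K t s * f s = ∫ s in t₀..t, k t s * f s :=
    fun t ht f => intervalIntegral.integral_congr fun s hs => by
      rw [hkK t s (hsub t ht s hs).1.1 (hsub t ht s hs).2 ht.2]
  have hX : ∀ t ∈ Icc t₀ T, g t + ∫ s in t₀..t, R t s lam * g s = X t := fun t ht =>
    congrArg₂ _ (hGg ht).symm (intervalIntegral.integral_congr fun s hs => by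
      obtain ⟨hs, hst⟩ := hsub t ht s hs
      rw [hR, ← Volterra.resolventKernel_eq_tsum_of_eqOn_triangle hkK hKn1 hKnrec lam hs.1 hst
        ht.2, hGg hs])
  have hXsol : ∀ t ∈ Icc t₀ T, X t = lam * (∫ s in t₀..t, k t s * X s) + G t :=
    fun t ht => Volterra.solution_eq hk hM hG lam ht.1
  refine ⟨⟨hXc.continuousOn.congr hX, fun t ht => ?_⟩, fun x hx hxeq t ht => ?_⟩
  · rw [hX t ht, intervalIntegral.integral_congr fun s hs => by rw [hX s (hsub t ht s hs).1],
      hKk t ht, hXsol t ht, hGg ht]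
  · refine (Volterra.eqOn_of_forall_eq_integral_add hk hM hx hXc.continuousOn (fun t ht => ?_)
      hXsol ht).trans (hX t ht).symm
    rw [hxeq t ht, hKk t ht, hGg ht]
end

section
/- If a continuous function x : [t₀,T] → ℝ solves the loaded Volterra integral equation, then its load vector c = (x(t₁), …, x(t_{m−1})) ∈ ℝ^{m−1} satisfies the linear system A(λ) c = d(λ), where A(λ)_{ij} = δ_{ij} + b_j(t_i,λ) (δ the Kronecker delta) and d(λ)_i = F(t_i,λ) for i,j = 1, …, m−1. -/
/-!
Moving the loads to the right-hand side, `x` solves the ordinary Volterra equation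
`x = g + λ V x` with `g = f - ∑ⱼ x(tⱼ) aⱼ`. By Tietze's theorem the kernel and `x` may be
taken continuous everywhere, so `V` is a linear operator on `C(ℝ, ℝ)` and `Vⁿ` is integration
against the iterated kernel `Kₙ`. The bound `|Kₙ(t,s)| ≤ Mⁿ (t-s)ⁿ⁻¹/(n-1)!` makes the
Neumann series `∑ λⁿ Vⁿ g` converge, and letting `N → ∞` in
`x = ∑_{n≤N} λⁿ Vⁿ g + λᴺ⁺¹ Vᴺ⁺¹ x` gives `x = g + ∫ R g`. At `t = tᵢ`, splitting `∫ R g`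
linearly in the loads yields `x(tᵢ) + ∑ⱼ bⱼ(tᵢ) x(tⱼ) = F(tᵢ)`, the `i`-th row of `A c = d`.
-/

open MeasureTheory Matrix

open Set Function intervalIntegral

lemma ContinuousOn.exists_continuousMap_eqOn {X : Type*} [TopologicalSpace X] [NormalSpace X]
    {s : Set X} (hs : IsClosed s) {f : X → ℝ} (hf : ContinuousOn f s) :
    ∃ g : C(X, ℝ), EqOn g f s := by
  obtain ⟨g, hg⟩ := ContinuousMap.exists_restrict_eq hs ⟨s.domRestrict f, hf.domRestrict⟩
  exact ⟨g, fun x hx => DFunLike.congr_fun hg ⟨x, hx⟩⟩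

theorem intervalIntegral.integral_integral_swap_triangle {u : ℝ → ℝ → ℝ}
    (hu : Continuous (uncurry u)) {a b : ℝ} (hab : a ≤ b) :
    ∫ w in a..b, ∫ z in a..w, u w z = ∫ z in a..b, ∫ w in z..b, u w z := by
  set v : ℝ × ℝ → ℝ := {q | q.2 ≤ q.1}.indicator (uncurry u)
  have hv : Integrable v ((volume.restrict (Icc a b)).prod (volume.restrict (Icc a b))) := by
    rw [Measure.prod_restrict, ← Measure.volume_eq_prod]
    exact (hu.continuousOn.integrableOn_compact (isCompact_Icc.prod isCompact_Icc)).indicator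
      (isClosed_le continuous_snd continuous_fst).measurableSet
  have inner_fst : ∀ w ∈ Icc a b, ∫ z in a..w, u w z = ∫ z in Icc a b, v (w, z) := by
    intro w hw
    have : ∀ z, v (w, z) = (Iic w).indicator (u w) z := fun z => by
      simp [v, indicator_apply]
    simp only [this]
    have hIcc : Icc a b ∩ Iic w = Icc a w := by
      ext z; simp only [mem_inter_iff, mem_Icc, mem_Iic]
      exact ⟨fun h => ⟨h.1.1, h.2⟩, fun h => ⟨⟨h.1, h.2.trans hw.2⟩, h.2⟩⟩
    rw [setIntegral_indicator measurableSet_Iic, hIcc, integral_Icc_eq_integral_Ioc,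
      integral_of_le hw.1]
  have inner_snd : ∀ z ∈ Icc a b, ∫ w in z..b, u w z = ∫ w in Icc a b, v (w, z) := by
    intro z hz
    have : ∀ w, v (w, z) = (Ici z).indicator (fun w => u w z) w := fun w => by
      simp [v, indicator_apply]
    simp only [this]
    have hIcc : Icc a b ∩ Ici z = Icc z b := by
      ext w; simp only [mem_inter_iff, mem_Icc, mem_Ici]
      exact ⟨fun h => ⟨h.2, h.1.2⟩, fun h => ⟨⟨hz.1.trans h.1, h.2⟩, h.1⟩⟩
    rw [setIntegral_indicator measurableSet_Ici, hIcc, integral_Icc_eq_integral_Ioc,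
      integral_of_le hz.2]
  calc ∫ w in a..b, ∫ z in a..w, u w z = ∫ w in Icc a b, ∫ z in Icc a b, v (w, z) := by
        rw [integral_of_le hab, ← integral_Icc_eq_integral_Ioc]
        exact setIntegral_congr_fun measurableSet_Icc inner_fst
    _ = ∫ z in Icc a b, ∫ w in Icc a b, v (w, z) := integral_integral_swap hv
    _ = ∫ z in a..b, ∫ w in z..b, u w z := by
        rw [integral_of_le hab, ← integral_Icc_eq_integral_Ioc]
        exact (setIntegral_congr_fun measurableSet_Icc inner_snd).symm

lemma exists_continuousMap_eq_of_continuousOn_triangle {K : ℝ → ℝ → ℝ} {t₀ T : ℝ}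
    (hK : ContinuousOn (fun q : ℝ × ℝ => K q.1 q.2)
      {q : ℝ × ℝ | t₀ ≤ q.2 ∧ q.2 ≤ q.1 ∧ q.1 ≤ T}) :
    ∃ k : C(ℝ × ℝ, ℝ), ∀ t s, t₀ ≤ s → s ≤ t → t ≤ T → k (t, s) = K t s := by
  have htri : IsClosed {q : ℝ × ℝ | t₀ ≤ q.2 ∧ q.2 ≤ q.1 ∧ q.1 ≤ T} :=
    (isClosed_le continuous_const continuous_snd).inter <|
      (isClosed_le continuous_snd continuous_fst).inter (isClosed_le continuous_fst continuous_const)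
  obtain ⟨k, hk⟩ := hK.exists_continuousMap_eqOn htri
  exact ⟨k, fun t s h₁ h₂ h₃ => hk (show (t, s) ∈ _ from ⟨h₁, h₂, h₃⟩)⟩

lemma Module.End.eq_sum_pow_smul_add {R M : Type*} [CommSemiring R] [AddCommMonoid M]
    [Module R M] (V : Module.End R M) (c : R) {x g : M} (h : x = g + c • V x) (N : ℕ) :
    x = ∑ n ∈ Finset.range N, c ^ n • (V ^ n) g + c ^ N • (V ^ N) x := by
  induction N with
  | zero => simp
  | succ N ih =>
    conv_lhs => rw [ih, h]
    rw [map_add, map_smul, smul_add, Finset.sum_range_succ, add_assoc, smul_smul, ← pow_succ,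
      ← Module.End.mul_apply, ← pow_succ]

namespace Volterra

variable (k : C(ℝ × ℝ, ℝ)) (t₀ : ℝ)

-- `iterKernel k n` is the paper's `Kₙ₊₁`.
noncomputable def iterKernel : ℕ → ℝ → ℝ → ℝ
  | 0 => fun t s => k (t, s)
  | n + 1 => fun t s => ∫ z in s..t, k (t, z) * iterKernel n z s

noncomputable def resolvent (lam t s : ℝ) : ℝ := ∑' n : ℕ, lam ^ (n + 1) * iterKernel k n t s

noncomputable def integralOperator : C(ℝ, ℝ) →ₗ[ℝ] C(ℝ, ℝ) where
  toFun u := ⟨fun t => ∫ s in t₀..t, k (t, s) * u s,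
    continuous_parametric_intervalIntegral_of_continuous (by fun_prop) continuous_id⟩
  map_add' u v := by
    ext t
    simp only [ContinuousMap.coe_mk, ContinuousMap.add_apply, mul_add]
    exact integral_add (by apply Continuous.intervalIntegrable; fun_prop)
      (by apply Continuous.intervalIntegrable; fun_prop)
  map_smul' c u := by
    ext t
    simp only [ContinuousMap.coe_mk, ContinuousMap.smul_apply, smul_eq_mul, RingHom.id_apply,
      mul_left_comm _ c, intervalIntegral.integral_const_mul]

lemma integralOperator_apply (u : C(ℝ, ℝ)) (t : ℝ) :
    integralOperator k t₀ u t = ∫ s in t₀..t, k (t, s) * u s := rfl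

lemma continuous_iterKernel (n : ℕ) : Continuous (uncurry (iterKernel k n)) := by
  induction n with
  | zero => exact k.continuous
  | succ n ih =>
    have hint : Continuous (uncurry fun (q : ℝ × ℝ) z => k (q.1, z) * iterKernel k n z q.2) :=
      (k.continuous.comp (continuous_fst.fst.prodMk continuous_snd)).mul
        (ih.comp (continuous_snd.prodMk continuous_fst.snd))
    have hsplit : uncurry (iterKernel k (n + 1)) = fun q : ℝ × ℝ =>
        (∫ z in (0 : ℝ)..q.1, k (q.1, z) * iterKernel k n z q.2) -
          ∫ z in (0 : ℝ)..q.2, k (q.1, z) * iterKernel k n z q.2 := by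
      ext q
      exact (integral_interval_sub_left (hint.uncurry_left q |>.intervalIntegrable _ _)
        (hint.uncurry_left q |>.intervalIntegrable _ _)).symm
    rw [hsplit]
    exact (continuous_parametric_intervalIntegral_of_continuous hint continuous_fst).sub
      (continuous_parametric_intervalIntegral_of_continuous hint continuous_snd)

open Nat in
lemma abs_iterKernel_le {M T : ℝ} (hM : ∀ t s, t₀ ≤ s → s ≤ t → t ≤ T → |k (t, s)| ≤ M)
    (n : ℕ) {t s : ℝ} (h₁ : t₀ ≤ s) (h₂ : s ≤ t) (h₃ : t ≤ T) :
    |iterKernel k n t s| ≤ M ^ (n + 1) * (t - s) ^ n / n ! := by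
  induction n generalizing t with
  | zero => simpa [iterKernel] using hM t s h₁ h₂ h₃
  | succ n ih =>
    have hM0 : 0 ≤ M := (abs_nonneg _).trans (hM t s h₁ h₂ h₃)
    have hcont : Continuous fun z => k (t, z) * iterKernel k n z s :=
      (k.continuous.comp (continuous_const.prodMk continuous_id)).mul
        ((continuous_iterKernel k n).comp (continuous_id.prodMk continuous_const))
    calc |iterKernel k (n + 1) t s| ≤ ∫ z in s..t, |k (t, z) * iterKernel k n z s| :=
          abs_integral_le_integral_abs h₂
      _ ≤ ∫ z in s..t, M ^ (n + 2) / n ! * (z - s) ^ n := by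
          refine integral_mono_on h₂ (hcont.abs.intervalIntegrable _ _)
            (by apply Continuous.intervalIntegrable; fun_prop) fun z hz => ?_
          rw [abs_mul]
          calc _ ≤ M * (M ^ (n + 1) * (z - s) ^ n / n !) :=
                mul_le_mul (hM t z (h₁.trans hz.1) hz.2 h₃) (ih hz.1 (hz.2.trans h₃))
                  (abs_nonneg _) hM0
            _ = _ := by ring
      _ = M ^ (n + 1 + 1) * (t - s) ^ (n + 1) / (n + 1)! := by
          rw [intervalIntegral.integral_const_mul, integral_comp_sub_right (fun z => z ^ n),
            sub_self, integral_pow, Nat.factorial_succ]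
          push_cast
          field_simp
          ring

lemma integralOperator_pow_succ_apply (u : C(ℝ, ℝ)) (n : ℕ) {t : ℝ} (ht : t₀ ≤ t) :
    (integralOperator k t₀ ^ (n + 1)) u t = ∫ s in t₀..t, iterKernel k n t s * u s := by
  induction n generalizing t with
  | zero => simp [integralOperator_apply, iterKernel]
  | succ n ih =>
    have hcont : Continuous (uncurry fun z s => k (t, z) * iterKernel k n z s * u s) :=
      ((k.continuous.comp (continuous_const.prodMk continuous_fst)).mul
        (continuous_iterKernel k n)).mul (u.continuous.comp continuous_snd)
    rw [pow_succ', Module.End.mul_apply, integralOperator_apply]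
    calc ∫ z in t₀..t, k (t, z) * (integralOperator k t₀ ^ (n + 1)) u z
        = ∫ z in t₀..t, ∫ s in t₀..z, k (t, z) * iterKernel k n z s * u s := by
          refine integral_congr fun z hz => ?_
          rw [uIcc_of_le ht] at hz
          simp only [ih hz.1, ← intervalIntegral.integral_const_mul, mul_assoc]
      _ = ∫ s in t₀..t, ∫ z in s..t, k (t, z) * iterKernel k n z s * u s :=
          integral_integral_swap_triangle hcont ht
      _ = ∫ s in t₀..t, iterKernel k (n + 1) t s * u s := by
          refine integral_congr fun s _ => ?_
          simp only [iterKernel, ← intervalIntegral.integral_mul_const]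

open Nat in
lemma exists_norm_resolvent_term_le (lam : ℝ) {t : ℝ} (ht : t₀ ≤ t) :
    ∃ C r : ℝ, ∀ n, ∀ s ∈ Icc t₀ t,
      ‖lam ^ (n + 1) * iterKernel k n t s‖ ≤ C * (r ^ n / n !) := by
  obtain ⟨M, hM⟩ := (isCompact_Icc.prod isCompact_Icc).exists_bound_of_continuousOn
    (s := Icc t₀ t ×ˢ Icc t₀ t) k.continuous.continuousOn
  have hM' : ∀ t' s, t₀ ≤ s → s ≤ t' → t' ≤ t → |k (t', s)| ≤ M := fun t' s h₁ h₂ h₃ => by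
    simpa using hM (t', s) ⟨⟨h₁.trans h₂, h₃⟩, h₁, h₂.trans h₃⟩
  refine ⟨|lam| * M, |lam| * M * (t - t₀), fun n s hs => ?_⟩
  have hM0 : 0 ≤ M := (abs_nonneg _).trans (hM' t₀ t₀ le_rfl le_rfl ht)
  have hts : (t - s) ^ n ≤ (t - t₀) ^ n :=
    pow_le_pow_left₀ (sub_nonneg.2 hs.2) (by linarith [hs.1]) n
  rw [norm_mul, norm_pow, Real.norm_eq_abs, Real.norm_eq_abs]
  calc |lam| ^ (n + 1) * |iterKernel k n t s|
      ≤ |lam| ^ (n + 1) * (M ^ (n + 1) * (t - t₀) ^ n / n !) := by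
        gcongr
        exact (abs_iterKernel_le k t₀ hM' n hs.1 hs.2 le_rfl).trans (by gcongr)
    _ = |lam| * M * ((|lam| * M * (t - t₀)) ^ n / n !) := by
        rw [mul_pow (|lam| * M), mul_pow]
        ring

lemma continuousOn_resolvent (lam : ℝ) {t : ℝ} (ht : t₀ ≤ t) :
    ContinuousOn (resolvent k lam t) (Icc t₀ t) := by
  obtain ⟨C, r, hCr⟩ := exists_norm_resolvent_term_le k t₀ lam ht
  exact continuousOn_tsum (fun n => (continuous_const.mul ((continuous_iterKernel k n).comp
    (continuous_const.prodMk continuous_id))).continuousOn)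
    ((Real.summable_pow_div_factorial r).mul_left C) hCr

open Nat in
lemma hasSum_integralOperator_pow_apply (lam : ℝ) (u : C(ℝ, ℝ)) {t : ℝ} (ht : t₀ ≤ t) :
    HasSum (fun n => lam ^ (n + 1) * (integralOperator k t₀ ^ (n + 1)) u t)
      (∫ s in t₀..t, resolvent k lam t s * u s) := by
  obtain ⟨C, r, hCr⟩ := exists_norm_resolvent_term_le k t₀ lam ht
  obtain ⟨B, hB⟩ := isCompact_Icc.exists_bound_of_continuousOn (s := Icc t₀ t)
    u.continuous.continuousOn
  have hsum := (Real.summable_pow_div_factorial r).mul_left C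
  simp only [integralOperator_pow_succ_apply k t₀ u _ ht, ← intervalIntegral.integral_const_mul,
    ← mul_assoc]
  refine hasSum_integral_of_dominated_convergence (fun n _ => C * (r ^ n / n !) * B)
    (fun n => ?_) (fun n => ae_of_all _ fun s hs => ?_) (ae_of_all _ fun _ _ => hsum.mul_right B)
    intervalIntegrable_const (ae_of_all _ fun s hs => ?_)
  · exact (continuous_const.mul ((continuous_iterKernel k n).comp
      (continuous_const.prodMk continuous_id))).mul u.continuous |>.aestronglyMeasurable
  · rw [uIoc_of_le ht] at hs
    rw [norm_mul]
    exact mul_le_mul (hCr n s (Ioc_subset_Icc_self hs)) (hB s (Ioc_subset_Icc_self hs))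
      (norm_nonneg _) ((norm_nonneg _).trans (hCr n s (Ioc_subset_Icc_self hs)))
  · rw [uIoc_of_le ht] at hs
    exact (hsum.of_norm_bounded fun n => hCr n s (Ioc_subset_Icc_self hs)).hasSum.mul_right (u s)

theorem apply_eq_add_integral_resolvent (lam : ℝ) {x g : C(ℝ, ℝ)}
    (h : x = g + lam • integralOperator k t₀ x) {t : ℝ} (ht : t₀ ≤ t) :
    x t = g t + ∫ s in t₀..t, resolvent k lam t s * g s := by
  set V := integralOperator k t₀
  have hexp : ∀ N, x t = g t + ∑ n ∈ Finset.range N, lam ^ (n + 1) * (V ^ (n + 1)) g t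
      + lam ^ (N + 1) * (V ^ (N + 1)) x t := by
    intro N
    have := congrArg (· t) (Module.End.eq_sum_pow_smul_add V lam h (N + 1))
    simp only [ContinuousMap.add_apply, ContinuousMap.coe_sum, Finset.sum_apply,
      ContinuousMap.smul_apply, smul_eq_mul, Finset.sum_range_succ', pow_zero, one_mul,
      Module.End.one_apply] at this
    linarith
  have hlim := ((tendsto_const_nhds (x := g t)).add
    (hasSum_integralOperator_pow_apply k t₀ lam g ht).tendsto_sum_nat).add
      (hasSum_integralOperator_pow_apply k t₀ lam x ht).summable.tendsto_atTop_zero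
  rw [add_zero] at hlim
  exact tendsto_nhds_unique (tendsto_const_nhds.congr hexp) hlim

theorem eq_add_integral_resolvent {T lam : ℝ} {x g : ℝ → ℝ}
    (hx : ContinuousOn x (Icc t₀ T))
    (h : ∀ t ∈ Icc t₀ T, x t = g t + lam * ∫ s in t₀..t, k (t, s) * x s)
    {t : ℝ} (ht : t ∈ Icc t₀ T) :
    x t = g t + ∫ s in t₀..t, resolvent k lam t s * g s := by
  obtain ⟨X, hX⟩ := hx.exists_continuousMap_eqOn isClosed_Icc
  have hg : EqOn (X - lam • integralOperator k t₀ X) g (Icc t₀ T) := fun t ht => by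
    have hVX : integralOperator k t₀ X t = ∫ s in t₀..t, k (t, s) * x s :=
      integral_congr fun s hs => by
        rw [uIcc_of_le ht.1] at hs
        simp only [hX ⟨hs.1, hs.2.trans ht.2⟩]
    simp only [ContinuousMap.sub_apply, ContinuousMap.smul_apply, smul_eq_mul, hVX, hX ht]
    linarith [h t ht]
  have hrep := apply_eq_add_integral_resolvent k t₀ lam (sub_add_cancel X _).symm ht.1
  rwa [hX ht, hg ht, integral_congr (g := fun s => resolvent k lam t s * g s) fun s hs => by
    rw [uIcc_of_le ht.1] at hs
    rw [hg ⟨hs.1, hs.2.trans ht.2⟩]] at hrep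

lemma eq_iterKernel_of_recursion {T : ℝ} {K : ℝ → ℝ → ℝ}
    (hk : ∀ t s, t₀ ≤ s → s ≤ t → t ≤ T → k (t, s) = K t s)
    {Kn : ℕ → ℝ → ℝ → ℝ} (hKn1 : ∀ t s, Kn 1 t s = K t s)
    (hKnrec : ∀ n, 2 ≤ n → ∀ t s, Kn n t s = ∫ z in s..t, K t z * Kn (n - 1) z s)
    (n : ℕ) {t s : ℝ} (h₁ : t₀ ≤ s) (h₂ : s ≤ t) (h₃ : t ≤ T) :
    Kn (n + 1) t s = iterKernel k n t s := by
  induction n generalizing t with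
  | zero => exact (hKn1 t s).trans (hk t s h₁ h₂ h₃).symm
  | succ n ih =>
    rw [hKnrec (n + 2) (by omega), show n + 2 - 1 = n + 1 from rfl, iterKernel]
    refine integral_congr fun z hz => ?_
    rw [uIcc_of_le h₂] at hz
    rw [ih hz.1 (hz.2.trans h₃), hk t z (h₁.trans hz.1) hz.2 h₃]

end Volterra

lemma intervalIntegral.integral_mul_sub_sum_mul {ι : Type*} (S : Finset ι) {r f : ℝ → ℝ}
    {a : ι → ℝ → ℝ} (c : ι → ℝ) {t₀ t : ℝ}
    (hf : IntervalIntegrable (fun s => r s * f s) volume t₀ t)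
    (ha : ∀ j, IntervalIntegrable (fun s => r s * a j s) volume t₀ t) :
    ∫ s in t₀..t, r s * (f s - ∑ j ∈ S, a j s * c j) =
      (∫ s in t₀..t, r s * f s) - ∑ j ∈ S, (∫ s in t₀..t, r s * a j s) * c j := by
  have haj : ∀ j, IntervalIntegrable (fun s => r s * a j s * c j) volume t₀ t :=
    fun j => (ha j).mul_const _
  have hsum : IntervalIntegrable (fun s => ∑ j ∈ S, r s * a j s * c j) volume t₀ t := by
    simpa only [Finset.sum_fn] using IntervalIntegrable.sum S fun j _ => haj j
  simp only [mul_sub, Finset.mul_sum, ← mul_assoc]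
  rw [integral_sub hf hsum, integral_finsetSum fun j _ => haj j]
  simp only [intervalIntegral.integral_mul_const]

theorem lvie_load_vector_satisfies_slae_general
    (t₀ T : ℝ) (m : ℕ)
    (p : Fin (m - 1) → ℝ)
    (hp : ∀ j, t₀ < p j ∧ p j < T)
    (f : ℝ → ℝ) (hf : ContinuousOn f (Set.Icc t₀ T))
    (a : Fin (m - 1) → ℝ → ℝ) (ha : ∀ j, ContinuousOn (a j) (Set.Icc t₀ T))
    (K : ℝ → ℝ → ℝ)
    (hK : ContinuousOn (fun q : ℝ × ℝ => K q.1 q.2)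
      {q : ℝ × ℝ | t₀ ≤ q.2 ∧ q.2 ≤ q.1 ∧ q.1 ≤ T})
    (lam : ℝ)
    (Kn : ℕ → ℝ → ℝ → ℝ)
    (hKn1 : ∀ t s, Kn 1 t s = K t s)
    (hKnrec : ∀ n, 2 ≤ n → ∀ t s, Kn n t s = ∫ z in s..t, K t z * Kn (n - 1) z s)
    (R : ℝ → ℝ → ℝ → ℝ)
    (hR : ∀ t s lam', R t s lam' = ∑' n : ℕ, lam' ^ (n + 1) * Kn (n + 1) t s)
    (F : ℝ → ℝ → ℝ)
    (hF : ∀ t lam', F t lam' = f t + ∫ s in t₀..t, R t s lam' * f s)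
    (b : Fin (m - 1) → ℝ → ℝ → ℝ)
    (hb : ∀ j t lam', b j t lam' = a j t + ∫ s in t₀..t, R t s lam' * a j s)
    (A : Matrix (Fin (m - 1)) (Fin (m - 1)) ℝ)
    (hA : ∀ i j, A i j = (if i = j then 1 else 0) + b j (p i) lam)
    (d : Fin (m - 1) → ℝ)
    (hd : ∀ i, d i = F (p i) lam)
    (x : ℝ → ℝ) (hx : ContinuousOn x (Set.Icc t₀ T))
    (hsol : ∀ t ∈ Set.Icc t₀ T,
      x t + ∑ j, a j t * x (p j) = lam * (∫ s in t₀..t, K t s * x s) + f t) :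
    A *ᵥ (fun j => x (p j)) = d := by
  obtain ⟨k, hkK⟩ := exists_continuousMap_eq_of_continuousOn_triangle hK
  have hvie : ∀ t ∈ Icc t₀ T,
      x t = (f t - ∑ j, a j t * x (p j)) + lam * ∫ s in t₀..t, k (t, s) * x s := fun t ht => by
    rw [integral_congr (g := fun s => K t s * x s) fun s hs => by
      rw [uIcc_of_le ht.1] at hs; rw [hkK t s hs.1 hs.2 ht.2]]
    linarith [hsol t ht]
  funext i
  obtain ⟨ht₀, htT⟩ : t₀ ≤ p i ∧ p i ≤ T := ⟨(hp i).1.le, (hp i).2.le⟩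
  have hR_eq : EqOn (R (p i) · lam) (Volterra.resolvent k lam (p i)) (Icc t₀ (p i)) :=
    fun s hs => (hR _ s lam).trans <| tsum_congr fun n => by
      rw [Volterra.eq_iterKernel_of_recursion k t₀ hkK hKn1 hKnrec n hs.1 hs.2 htT]
  have hint : ∀ u, ContinuousOn u (Icc t₀ T) →
      IntervalIntegrable (fun s => R (p i) s lam * u s) volume t₀ (p i) := fun u hu =>
    (((Volterra.continuousOn_resolvent k t₀ lam ht₀).congr hR_eq).mul
      (hu.mono (Icc_subset_Icc_right htT))).intervalIntegrable_of_Icc ht₀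
  have hrep := Volterra.eq_add_integral_resolvent k t₀ hx hvie ⟨ht₀, htT⟩
  rw [integral_congr (g := fun s => R (p i) s lam * (f s - ∑ j, a j s * x (p j)))
      fun s hs => by rw [uIcc_of_le ht₀] at hs; rw [← hR_eq hs],
    integral_mul_sub_sum_mul _ _ (hint f hf) fun j => hint (a j) (ha j)] at hrep
  simp only [mulVec, dotProduct, hA, hd, hF, hb, add_mul, Finset.sum_add_distrib, ite_mul,
    one_mul, zero_mul, Finset.sum_ite_eq, Finset.mem_univ, if_true]
  linarith

/-- If a continuous x solves the LVIE, then its load vector c = (x(t₁),…,x(t_{m-1}))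
satisfies the linear algebraic system A(λ) c = d(λ). -/
theorem lvie_load_vector_satisfies_slae
    (t₀ T : ℝ) (ht : t₀ < T) (m : ℕ) (hm : 2 ≤ m)
    (p : Fin (m - 1) → ℝ) (hpmono : StrictMono p)
    (hp : ∀ j, t₀ < p j ∧ p j < T)
    (f : ℝ → ℝ) (hf : ContinuousOn f (Set.Icc t₀ T))
    (a : Fin (m - 1) → ℝ → ℝ) (ha : ∀ j, ContinuousOn (a j) (Set.Icc t₀ T))
    (K : ℝ → ℝ → ℝ)
    (hK : ContinuousOn (fun q : ℝ × ℝ => K q.1 q.2)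
      {q : ℝ × ℝ | t₀ ≤ q.2 ∧ q.2 ≤ q.1 ∧ q.1 ≤ T})
    (lam : ℝ)
    (Kn : ℕ → ℝ → ℝ → ℝ)
    (hKn1 : ∀ t s, Kn 1 t s = K t s)
    (hKnrec : ∀ n, 2 ≤ n → ∀ t s, Kn n t s = ∫ z in s..t, K t z * Kn (n - 1) z s)
    (R : ℝ → ℝ → ℝ → ℝ)
    (hR : ∀ t s lam', R t s lam' = ∑' n : ℕ, lam' ^ (n + 1) * Kn (n + 1) t s)
    (F : ℝ → ℝ → ℝ)
    (hF : ∀ t lam', F t lam' = f t + ∫ s in t₀..t, R t s lam' * f s)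
    (b : Fin (m - 1) → ℝ → ℝ → ℝ)
    (hb : ∀ j t lam', b j t lam' = a j t + ∫ s in t₀..t, R t s lam' * a j s)
    (A : Matrix (Fin (m - 1)) (Fin (m - 1)) ℝ)
    (hA : ∀ i j, A i j = (if i = j then 1 else 0) + b j (p i) lam)
    (d : Fin (m - 1) → ℝ)
    (hd : ∀ i, d i = F (p i) lam)
    (x : ℝ → ℝ) (hx : ContinuousOn x (Set.Icc t₀ T))
    (hsol : ∀ t ∈ Set.Icc t₀ T,
      x t + ∑ j, a j t * x (p j) = lam * (∫ s in t₀..t, K t s * x s) + f t) :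
    A *ᵥ (fun j => x (p j)) = d :=
  lvie_load_vector_satisfies_slae_general t₀ T m p hp f hf a ha K hK lam Kn hKn1 hKnrec R hR F hF b
    hb A hA d hd x hx hsol
end

section
/- (Corollary to Theorem 1) If det A(0) ≠ 0, where A(0) is the (m−1)×(m−1) matrix with entries δ_{ij} + a_j(t_i), then there exists ε > 0 such that for every λ ∈ ℝ with |λ| < ε the loaded Volterra integral equation has exactly one continuous solution. -/
/-! On `C([t₀, T])` the equation reads `(L₀ - λ V) x = f`, where `V` is the Volterra operator and
`L₀ x = x + ∑ⱼ x(tⱼ) aⱼ`. Writing `Φ x = (x(tᵢ))ᵢ` and `P c = ∑ⱼ cⱼ aⱼ`, we have `L₀ = 1 + P Φ`,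
while `1 + Φ P` acts on `ℝ^(m-1)` by the matrix `A(0)`; so `L₀` is invertible as soon as `A(0)` is.
The units of the Banach algebra of operators form an open set, hence `L₀ - λ V` stays invertible
for small `|λ|`. The kernel is only continuous on the triangle, so `V` is built from a Tietze
extension of it to `ℝ²`. -/

open MeasureTheory Matrix

open Set Function Topology

namespace ContinuousLinearMap

variable {R E F : Type*} [Ring R] [TopologicalSpace E] [AddCommGroup E] [Module R E]
  [IsTopologicalAddGroup E] [TopologicalSpace F] [AddCommGroup F] [Module R F]
  [IsTopologicalAddGroup F]

/- The inverse is `1 - P (1 + Φ P)⁻¹ Φ`, as in the Woodbury identity. -/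
theorem isUnit_one_add_comp_swap {Φ : E →L[R] F} {P : F →L[R] E}
    (h : IsUnit (1 + Φ.comp P)) : IsUnit (1 + P.comp Φ) := by
  obtain ⟨u, hu⟩ := h
  set v : F →L[R] F := ↑u⁻¹
  have right_inv (y : F) : (1 + Φ.comp P) (v y) = y := by
    rw [← hu, ← mul_apply_eq_comp, u.mul_inv, one_apply_eq_self]
  have left_inv (y : F) : v ((1 + Φ.comp P) y) = y := by
    rw [← hu, ← mul_apply_eq_comp, u.inv_mul, one_apply_eq_self]
  refine ⟨⟨1 + P.comp Φ, 1 - P.comp (v.comp Φ), ?_, ?_⟩, rfl⟩ <;> ext x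
  · have key : P (v (Φ x)) + P (Φ (P (v (Φ x)))) = P (Φ x) := by
      rw [← map_add]
      simpa using congrArg P (right_inv (Φ x))
    simp only [mul_apply_eq_comp, _root_.add_apply, _root_.sub_apply, one_apply_eq_self,
      comp_apply, map_sub]
    rw [← key]
    abel
  · have key : v (Φ (x + P (Φ x))) = Φ x := by
      simpa using left_inv (Φ x)
    simp only [mul_apply_eq_comp, _root_.add_apply, _root_.sub_apply, one_apply_eq_self,
      comp_apply, key]
    abel

theorem isUnit_of_apply_eq_mulVec {𝕜 ι : Type*} [Field 𝕜] [TopologicalSpace 𝕜]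
    [IsTopologicalRing 𝕜] [Fintype ι] [DecidableEq ι] {Q : (ι → 𝕜) →L[𝕜] ι → 𝕜}
    {A : Matrix ι ι 𝕜} (hA : IsUnit A.det) (hQ : ∀ c, Q c = A *ᵥ c) : IsUnit Q := by
  refine ⟨⟨Q, ⟨Matrix.toLin' A⁻¹, LinearMap.continuous_on_pi _⟩, ?_, ?_⟩, rfl⟩ <;> ext1 c <;>
    simp [hQ, mulVec_mulVec, mul_nonsing_inv _ hA, nonsing_inv_mul _ hA]

theorem existsUnique_apply_eq_of_isUnit {R E : Type*} [Semiring R] [TopologicalSpace E]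
    [AddCommMonoid E] [Module R E] [ContinuousAdd E] {U : E →L[R] E} (hU : IsUnit U) (y : E) :
    ∃! x, U x = y :=
  ((Module.End.isUnit_iff _).1 (hU.map toLinearMapRingHom)).existsUnique y

end ContinuousLinearMap

theorem IsUnit.exists_pos_forall_isUnit_sub_smul {𝕜 R : Type*} [NormedField 𝕜] [NormedRing R]
    [NormedSpace 𝕜 R] [HasSummableGeomSeries R] {L : R} (hL : IsUnit L) (V : R) :
    ∃ ε > 0, ∀ c : 𝕜, ‖c‖ < ε → IsUnit (L - c • V) := by
  have hcont : Continuous fun c : 𝕜 => L - c • V := by fun_prop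
  have : ∀ᶠ c in 𝓝 (0 : 𝕜), IsUnit (L - c • V) :=
    (Units.isOpen.preimage hcont).mem_nhds (by simpa using hL)
  simpa [dist_eq_norm] using Metric.eventually_nhds_iff.1 this

theorem ContinuousOn.exists_continuous_eqOn {X : Type*} [TopologicalSpace X] [NormalSpace X]
    {s : Set X} (hs : IsClosed s) {f : X → ℝ} (hf : ContinuousOn f s) :
    ∃ g : X → ℝ, Continuous g ∧ EqOn g f s := by
  obtain ⟨g, hg⟩ := ContinuousMap.exists_restrict_eq hs ⟨s.domRestrict f, hf.domRestrict⟩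
  exact ⟨g, g.continuous, fun x hx => congrArg (· ⟨x, hx⟩) hg⟩

noncomputable section LoadOperator

variable {𝕜 X ι : Type*} [Field 𝕜] [TopologicalSpace 𝕜] [IsTopologicalRing 𝕜]
  [TopologicalSpace X] [Fintype ι]

def loadOperator (x : ι → X) (u : ι → C(X, 𝕜)) : C(X, 𝕜) →L[𝕜] C(X, 𝕜) :=
  1 + (∑ j, (ContinuousLinearMap.proj j).smulRight (u j)).comp
    (ContinuousLinearMap.pi fun i => ContinuousMap.evalCLM 𝕜 (x i))

theorem loadOperator_apply (x : ι → X) (u : ι → C(X, 𝕜)) (y : C(X, 𝕜)) (t : X) :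
    loadOperator x u y t = y t + ∑ j, y (x j) * u j t := by
  simp [loadOperator]

theorem isUnit_loadOperator [DecidableEq ι] {x : ι → X} {u : ι → C(X, 𝕜)}
    (h : IsUnit (1 + Matrix.of fun i j => u j (x i)).det) : IsUnit (loadOperator x u) := by
  refine ContinuousLinearMap.isUnit_one_add_comp_swap <|
    ContinuousLinearMap.isUnit_of_apply_eq_mulVec h fun c => ?_
  ext i
  simp [mulVec, dotProduct, one_apply, add_mul, Finset.sum_add_distrib, mul_comm (c _)]

end LoadOperator

noncomputable section VolterraOperator

variable {a b : ℝ} (hab : a ≤ b) {k : ℝ → ℝ → ℝ}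

theorem continuous_volterraIntegral (hk : Continuous (uncurry k)) (x : C(Icc a b, ℝ)) :
    Continuous fun t : Icc a b => ∫ s in a..(t : ℝ), k t s * IccExtend hab x s :=
  intervalIntegral.continuous_parametric_intervalIntegral_of_continuous
    ((hk.comp (continuous_subtype_val.prodMap continuous_id)).mul
      (x.continuous.Icc_extend'.comp continuous_snd)) continuous_subtype_val

theorem intervalIntegrable_kernel_mul (hk : Continuous (uncurry k)) (x : C(Icc a b, ℝ))
    (t c d : ℝ) : IntervalIntegrable (fun s => k t s * IccExtend hab x s) volume c d :=
  ((hk.comp (Continuous.prodMk_right t)).mul x.continuous.Icc_extend').intervalIntegrable c d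

def volterraLinearMap (hk : Continuous (uncurry k)) : C(Icc a b, ℝ) →ₗ[ℝ] C(Icc a b, ℝ) where
  toFun x := ⟨fun t => ∫ s in a..(t : ℝ), k t s * IccExtend hab x s,
    continuous_volterraIntegral hab hk x⟩
  map_add' x y := by
    ext t
    simp only [ContinuousMap.coe_mk, ContinuousMap.add_apply, IccExtend_apply, mul_add]
    exact intervalIntegral.integral_add (intervalIntegrable_kernel_mul hab hk x t a t)
      (intervalIntegrable_kernel_mul hab hk y t a t)
  map_smul' c x := by
    ext t
    simp [IccExtend_apply, mul_left_comm _ c, intervalIntegral.integral_const_mul]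

theorem exists_bound_volterraLinearMap (hk : Continuous (uncurry k)) :
    ∃ C, ∀ x, ‖volterraLinearMap hab hk x‖ ≤ C * ‖x‖ := by
  obtain ⟨M, hM⟩ := (isCompact_Icc.prod isCompact_Icc).exists_bound_of_continuousOn
    hk.continuousOn (s := Icc a b ×ˢ Icc a b)
  have hM0 : 0 ≤ M :=
    (norm_nonneg _).trans (hM (a, a) ⟨left_mem_Icc.2 hab, left_mem_Icc.2 hab⟩)
  have : Nonempty (Icc a b) := ⟨⟨a, left_mem_Icc.2 hab⟩⟩
  refine ⟨M * (b - a), fun x => (ContinuousMap.norm_le_of_nonempty _).2 fun t => ?_⟩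
  have hbound : ∀ s ∈ uIoc a (t : ℝ), ‖k t s * IccExtend hab x s‖ ≤ M * ‖x‖ := by
    intro s hs
    rw [uIoc_of_le t.2.1] at hs
    rw [norm_mul]
    exact mul_le_mul (hM (t, s) ⟨t.2, hs.1.le, hs.2.trans t.2.2⟩) (x.norm_coe_le_norm _)
      (norm_nonneg _) hM0
  calc ‖volterraLinearMap hab hk x t‖ = ‖∫ s in a..(t : ℝ), k t s * IccExtend hab x s‖ := rfl
    _ ≤ M * ‖x‖ * |(t : ℝ) - a| := intervalIntegral.norm_integral_le_of_norm_le_const hbound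
    _ ≤ M * ‖x‖ * (b - a) := by
        rw [abs_of_nonneg (sub_nonneg.2 t.2.1)]
        gcongr
        exact t.2.2
    _ = M * (b - a) * ‖x‖ := by ring

def volterraOperator (hk : Continuous (uncurry k)) : C(Icc a b, ℝ) →L[ℝ] C(Icc a b, ℝ) :=
  (volterraLinearMap hab hk).mkContinuousOfExistsBound (exists_bound_volterraLinearMap hab hk)

theorem volterraOperator_apply_of_eqOn (hk : Continuous (uncurry k)) {K : ℝ → ℝ → ℝ}
    (hkK : ∀ t s, a ≤ s → s ≤ t → t ≤ b → k t s = K t s) (x : C(Icc a b, ℝ)) (t : Icc a b) :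
    volterraOperator hab hk x t = ∫ s in a..(t : ℝ), K t s * IccExtend hab x s :=
  intervalIntegral.integral_congr fun s hs => by
    rw [uIcc_of_le t.2.1] at hs
    simp only [hkK t s hs.1 hs.2 t.2.2]

end VolterraOperator

theorem lvie_unique_solution_for_small_lambda_general
    (t₀ T : ℝ) (ht : t₀ < T) (m : ℕ)
    (p : Fin (m - 1) → ℝ)
    (hp : ∀ j, t₀ < p j ∧ p j < T)
    (f : ℝ → ℝ) (hf : ContinuousOn f (Set.Icc t₀ T))
    (a : Fin (m - 1) → ℝ → ℝ) (ha : ∀ j, ContinuousOn (a j) (Set.Icc t₀ T))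
    (K : ℝ → ℝ → ℝ)
    (hK : ContinuousOn (fun q : ℝ × ℝ => K q.1 q.2)
      {q : ℝ × ℝ | t₀ ≤ q.2 ∧ q.2 ≤ q.1 ∧ q.1 ≤ T})
    (A₀ : Matrix (Fin (m - 1)) (Fin (m - 1)) ℝ)
    (hA₀ : ∀ i j, A₀ i j = (if i = j then 1 else 0) + a j (p i))
    (hdet : A₀.det ≠ 0) :
    ∃ ε > (0 : ℝ), ∀ lam : ℝ, |lam| < ε →
      ∃! x : C(Set.Icc t₀ T, ℝ),
        ∀ t ∈ Set.Icc t₀ T,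
          Set.IccExtend ht.le x t + ∑ j, a j t * Set.IccExtend ht.le x (p j) =
            lam * (∫ s in t₀..t, K t s * Set.IccExtend ht.le x s) + f t := by
  obtain ⟨k, hk, hkK⟩ := hK.exists_continuous_eqOn <|
    (isClosed_le continuous_const continuous_snd).inter <|
      (isClosed_le continuous_snd continuous_fst).inter
        (isClosed_le continuous_fst continuous_const)
  have hk' : Continuous (uncurry (curry k)) := by rwa [uncurry_curry]
  let pt (j : Fin (m - 1)) : Icc t₀ T := ⟨p j, (hp j).1.le, (hp j).2.le⟩
  let L₀ := loadOperator pt fun j => ⟨_, (ha j).domRestrict⟩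
  have hA₀' : A₀ = 1 + Matrix.of fun i j => a j (p i) := by
    ext i j
    simp [hA₀, one_apply]
  have hL₀ : IsUnit L₀ := isUnit_loadOperator (hA₀' ▸ isUnit_iff_ne_zero.2 hdet)
  obtain ⟨ε, hε, hsmall⟩ :=
    hL₀.exists_pos_forall_isUnit_sub_smul (𝕜 := ℝ) (volterraOperator ht.le hk')
  refine ⟨ε, hε, fun lam hlam => ?_⟩
  convert ContinuousLinearMap.existsUnique_apply_eq_of_isUnit
    (hsmall lam (by rwa [Real.norm_eq_abs])) ⟨_, hf.domRestrict⟩ using 2 with x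
  rw [ContinuousMap.ext_iff, Subtype.forall]
  refine forall₂_congr fun t ht' => ?_
  have hV := volterraOperator_apply_of_eqOn ht.le hk'
    (fun t s h₁ h₂ h₃ => hkK (x := (t, s)) ⟨h₁, h₂, h₃⟩) x ⟨t, ht'⟩
  have hpt (j : Fin (m - 1)) : IccExtend ht.le x (p j) = x (pt j) :=
    IccExtend_of_mem _ _ (pt j).2
  simp [L₀, loadOperator_apply, hV, hpt, IccExtend_of_mem _ _ ht', mul_comm (a _ t),
    sub_eq_iff_eq_add']

/-- Corollary to Theorem 1: if det A(0) ≠ 0, where A(0)ᵢⱼ = δᵢⱼ + aⱼ(tᵢ), then for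
all sufficiently small |λ| the LVIE has exactly one continuous solution. -/
theorem lvie_unique_solution_for_small_lambda
    (t₀ T : ℝ) (ht : t₀ < T) (m : ℕ) (hm : 2 ≤ m)
    (p : Fin (m - 1) → ℝ) (hpmono : StrictMono p)
    (hp : ∀ j, t₀ < p j ∧ p j < T)
    (f : ℝ → ℝ) (hf : ContinuousOn f (Set.Icc t₀ T))
    (a : Fin (m - 1) → ℝ → ℝ) (ha : ∀ j, ContinuousOn (a j) (Set.Icc t₀ T))
    (K : ℝ → ℝ → ℝ)
    (hK : ContinuousOn (fun q : ℝ × ℝ => K q.1 q.2)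
      {q : ℝ × ℝ | t₀ ≤ q.2 ∧ q.2 ≤ q.1 ∧ q.1 ≤ T})
    (A₀ : Matrix (Fin (m - 1)) (Fin (m - 1)) ℝ)
    (hA₀ : ∀ i j, A₀ i j = (if i = j then 1 else 0) + a j (p i))
    (hdet : A₀.det ≠ 0) :
    ∃ ε > (0 : ℝ), ∀ lam : ℝ, |lam| < ε →
      ∃! x : C(Set.Icc t₀ T, ℝ),
        ∀ t ∈ Set.Icc t₀ T,
          Set.IccExtend ht.le x t + ∑ j, a j t * Set.IccExtend ht.le x (p j) =
            lam * (∫ s in t₀..t, K t s * Set.IccExtend ht.le x s) + f t :=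
  lvie_unique_solution_for_small_lambda_general t₀ T ht m p hp f hf a ha K hK A₀ hA₀ hdet
end
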